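/- For the detection probability P_detect = 1/2 − (1/8)[FF'(3 + cos x cos x') + DD'(1 + 3 cos y cos y') + FD'(cos x + cos y') + DF'(cos y + cos x')] with D = 1−F, D' = 1−F', F, F' ∈ [0,1], x, x', y, y' ∈ [0, π/2], the minimum over F, F' is attained at a corner (F,F') ∈ {0,1}², and the minima at the corners F=F'=0 and F=F'=1 are (3/8)(1 − cos y cos y') and (1/8)(1 − cos x cos x') respectively; moreover the corners F=0,F'=1 and F=1,F'=0 never give a value strictly below the F=F'=1 corner value for all parameter choices. -/
import Mathlib


open Real Set

noncomputable section

/-- The detection probability as a function of F, F', x, x', y, y'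
(with D = 1 − F, D' = 1 − F'). -/
def Pdetect (F F' x x' y y' : ℝ) : ℝ :=
  1/2 - (1/8) * (F * F' * (3 + cos x * cos x')
    + (1 - F) * (1 - F') * (1 + 3 * cos y * cos y')
    + F * (1 - F') * (cos x + cos y')
    + (1 - F) * F' * (cos y + cos x'))

/-- the minimum of P_detect over F, F' ∈ [0,1] is attained at a corner;
the corner values at F=F'=0 and F=F'=1 are (3/8)(1−cos y cos y') and
(1/8)(1−cos x cos x'); and the mixed corners never beat the F=F'=1 corner. -/
theorem stmt8 (x x' y y' : ℝ)
    (hx : x ∈ Icc 0 (π/2)) (hx' : x' ∈ Icc 0 (π/2))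
    (hy : y ∈ Icc 0 (π/2)) (hy' : y' ∈ Icc 0 (π/2)) :
    (∃ c c' : ℝ, (c = 0 ∨ c = 1) ∧ (c' = 0 ∨ c' = 1) ∧
      ∀ F ∈ Icc (0:ℝ) 1, ∀ F' ∈ Icc (0:ℝ) 1,
        Pdetect c c' x x' y y' ≤ Pdetect F F' x x' y y') ∧
    Pdetect 0 0 x x' y y' = (3/8) * (1 - cos y * cos y') ∧
    Pdetect 1 1 x x' y y' = (1/8) * (1 - cos x * cos x') ∧
    Pdetect 1 1 x x' y y' ≤ Pdetect 0 1 x x' y y' ∧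
    Pdetect 1 1 x x' y y' ≤ Pdetect 1 0 x x' y y' := by
  have hpi : 0 < π := pi_pos
  have hcx : 0 ≤ cos x := cos_nonneg_of_mem_Icc ⟨by linarith [hx.1], hx.2⟩
  have hcx' : 0 ≤ cos x' := cos_nonneg_of_mem_Icc ⟨by linarith [hx'.1], hx'.2⟩
  have hcy : 0 ≤ cos y := cos_nonneg_of_mem_Icc ⟨by linarith [hy.1], hy.2⟩
  have hcy' : 0 ≤ cos y' := cos_nonneg_of_mem_Icc ⟨by linarith [hy'.1], hy'.2⟩
  have h1x := cos_le_one x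
  have h1x' := cos_le_one x'
  have h1y := cos_le_one y
  have h1y' := cos_le_one y'
  have h01 : Pdetect 1 1 x x' y y' ≤ Pdetect 0 1 x x' y y' := by
    simp only [Pdetect]; nlinarith [mul_nonneg hcx hcx']
  have h10 : Pdetect 1 1 x x' y y' ≤ Pdetect 1 0 x x' y y' := by
    simp only [Pdetect]; nlinarith [mul_nonneg hcx hcx']
  have key : ∀ F F' : ℝ, Pdetect F F' x x' y y'
      = (1-F)*(1-F') * Pdetect 0 0 x x' y y' + (1-F)*F' * Pdetect 0 1 x x' y y'
        + F*(1-F') * Pdetect 1 0 x x' y y' + F*F' * Pdetect 1 1 x x' y y' := by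
    intro F F'; simp only [Pdetect]; ring
  refine ⟨?_, by simp only [Pdetect]; ring, by simp only [Pdetect]; ring, h01, h10⟩
  rcases le_total (Pdetect 0 0 x x' y y') (Pdetect 1 1 x x' y y') with h | h
  · refine ⟨0, 0, Or.inl rfl, Or.inl rfl, ?_⟩
    intro F hF F' hF'
    rw [key F F']
    obtain ⟨hF0, hF1⟩ := hF
    obtain ⟨hF'0, hF'1⟩ := hF'
    nlinarith [mul_nonneg hF0 hF'0, mul_nonneg hF0 (sub_nonneg.2 hF'1),
      mul_nonneg (sub_nonneg.2 hF1) hF'0,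
      mul_nonneg (sub_nonneg.2 hF1) (sub_nonneg.2 hF'1)]
  · refine ⟨1, 1, Or.inr rfl, Or.inr rfl, ?_⟩
    intro F hF F' hF'
    rw [key F F']
    obtain ⟨hF0, hF1⟩ := hF
    obtain ⟨hF'0, hF'1⟩ := hF'
    nlinarith [mul_nonneg hF0 hF'0, mul_nonneg hF0 (sub_nonneg.2 hF'1),
      mul_nonneg (sub_nonneg.2 hF1) hF'0,
      mul_nonneg (sub_nonneg.2 hF1) (sub_nonneg.2 hF'1)]
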